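/- For symmetric positive definite matrices L, L̂ ∈ 𝒫(n), if every eigenvalue λ_j of L̂⁻¹L satisfies e^{−δ} ≤ λ_j ≤ e^{δ} for some δ > 0, then d_h(L‖L̂) ≤ (1/2) e^{δ} d_R(L,L̂)², where d_R(L,L̂)² = Σ_j (log λ_j)². -/

import Mathlib

open Matrix Polynomial

/-- Log-determinant Bregman divergence on n×n SPD matrices. -/
noncomputable def dh (n : ℕ) (L Lhat : Matrix (Fin n) (Fin n) ℝ) : ℝ :=
  Real.log (Lhat.det / L.det) + (Lhat⁻¹ * L).trace - n

/-!
With `λⱼ` the eigenvalues of `L̂⁻¹ L`, `det (L̂⁻¹ L) = ∏ⱼ λⱼ` and `tr (L̂⁻¹ L) = ∑ⱼ λⱼ` turn the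
divergence into `∑ⱼ (λⱼ - 1 - log λⱼ)`. Writing `tⱼ = log λⱼ ∈ [-δ, δ]`, Taylor's theorem with
Lagrange remainder gives `e^{tⱼ} - 1 - tⱼ = e^{ξ} tⱼ² / 2` for some `ξ` between `0` and `tⱼ`,
and `e^{ξ} ≤ e^{δ}`.
-/

theorem Real.exp_sub_one_sub_le (t : ℝ) : Real.exp t - 1 - t ≤ Real.exp |t| * t ^ 2 / 2 := by
  rcases eq_or_ne t 0 with rfl | ht
  · simp
  obtain ⟨ξ, ⟨-, hξ⟩, h⟩ := taylor_mean_remainder_lagrange_iteratedDeriv (n := 1) (f := Real.exp)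
    ht.symm Real.contDiff_exp.contDiffOn
  have hderiv : derivWithin Real.exp (Set.uIcc 0 t) 0 = 1 := by
    rw [(Real.hasDerivAt_exp 0).hasDerivWithinAt.derivWithin
      (uniqueDiffOn_uIcc ht.symm 0 Set.left_mem_uIcc), Real.exp_zero]
  simp only [taylorWithinEval_succ, taylor_within_zero_eval, Real.exp_zero, CharP.cast_eq_zero,
    zero_add, Nat.factorial_zero, Nat.cast_one, mul_one, inv_one, sub_zero, pow_one, one_mul,
    iteratedDerivWithin_one, hderiv, smul_eq_mul, Nat.reduceAdd, iteratedDeriv_eq_iterate,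
    Real.iter_deriv_exp, Nat.factorial_two, Nat.cast_ofNat] at h
  calc Real.exp t - 1 - t = Real.exp ξ * t ^ 2 / 2 := by rw [← h]; ring
    _ ≤ Real.exp |t| * t ^ 2 / 2 := by
      gcongr
      exact hξ.le.trans (max_le (abs_nonneg t) (le_abs_self t))

theorem Real.sub_one_sub_log_le {x : ℝ} (hx : 0 < x) :
    x - 1 - Real.log x ≤ Real.exp |Real.log x| * Real.log x ^ 2 / 2 := by
  simpa only [Real.exp_log hx] using Real.exp_sub_one_sub_le (Real.log x)

namespace Matrix

variable {ι R : Type*} [Fintype ι] [DecidableEq ι] [CommRing R] {M : Matrix ι ι R} {μ : ι → R}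

theorem splits_charpoly_of_charpoly_eq_prod (h : M.charpoly = ∏ i, (X - C (μ i))) :
    M.charpoly.Splits := by
  rw [h]
  exact Splits.prod fun i _ => Splits.X_sub_C _

variable [IsDomain R]

theorem roots_charpoly_of_charpoly_eq_prod (h : M.charpoly = ∏ i, (X - C (μ i))) :
    M.charpoly.roots = Finset.univ.val.map μ := by
  rw [h, Finset.prod_eq_multiset_prod]
  simpa only [Multiset.map_map, Function.comp_def] using
    roots_multiset_prod_X_sub_C (Finset.univ.val.map μ)

theorem det_eq_prod_of_charpoly_eq_prod (h : M.charpoly = ∏ i, (X - C (μ i))) :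
    M.det = ∏ i, μ i := by
  rw [det_eq_prod_roots_charpoly_of_splits (splits_charpoly_of_charpoly_eq_prod h),
    roots_charpoly_of_charpoly_eq_prod h]
  rfl

theorem trace_eq_sum_of_charpoly_eq_prod (h : M.charpoly = ∏ i, (X - C (μ i))) :
    M.trace = ∑ i, μ i := by
  rw [trace_eq_sum_roots_charpoly_of_splits (splits_charpoly_of_charpoly_eq_prod h),
    roots_charpoly_of_charpoly_eq_prod h]
  rfl

end Matrix

theorem dh_eq_sum_sub_one_sub_log {n : ℕ} {L Lhat : Matrix (Fin n) (Fin n) ℝ} {lam : Fin n → ℝ}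
    (hchar : (Lhat⁻¹ * L).charpoly = ∏ j, (X - C (lam j))) (hlam : ∀ j, lam j ≠ 0) :
    dh n L Lhat = ∑ j, (lam j - 1 - Real.log (lam j)) := by
  have hratio : Lhat.det / L.det = ((Lhat⁻¹ * L).det)⁻¹ := by
    rw [det_mul, det_nonsing_inv, Ring.inverse_eq_inv', mul_inv, inv_inv, div_eq_mul_inv]
  rw [dh, hratio, det_eq_prod_of_charpoly_eq_prod hchar, trace_eq_sum_of_charpoly_eq_prod hchar,
    Real.log_inv, Real.log_prod fun j _ => hlam j, Finset.sum_sub_distrib, Finset.sum_sub_distrib]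
  simp only [Finset.sum_const, Finset.card_univ, Fintype.card_fin, nsmul_eq_mul, mul_one]
  ring

theorem bregman_le_half_exp_delta_dR_sq_general
    (n : ℕ) (L Lhat : Matrix (Fin n) (Fin n) ℝ)
    (δ : ℝ)
    (lam : Fin n → ℝ)
    (hchar : (Lhat⁻¹ * L).charpoly = ∏ j, (X - C (lam j)))
    (hb : ∀ j, Real.exp (-δ) ≤ lam j ∧ lam j ≤ Real.exp δ) :
    dh n L Lhat ≤ (1 / 2) * Real.exp δ * ∑ j, (Real.log (lam j)) ^ 2 := by
  have hlam : ∀ j, 0 < lam j := fun j => (Real.exp_pos _).trans_le (hb j).1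
  have hlog : ∀ j, |Real.log (lam j)| ≤ δ := fun j => abs_le.2
    ⟨(Real.le_log_iff_exp_le (hlam j)).2 (hb j).1, (Real.log_le_iff_le_exp (hlam j)).2 (hb j).2⟩
  rw [dh_eq_sum_sub_one_sub_log hchar fun j => (hlam j).ne', Finset.mul_sum]
  gcongr with j
  calc lam j - 1 - Real.log (lam j)
      ≤ Real.exp |Real.log (lam j)| * Real.log (lam j) ^ 2 / 2 := Real.sub_one_sub_log_le (hlam j)
    _ ≤ Real.exp δ * Real.log (lam j) ^ 2 / 2 := by gcongr; exact hlog j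
    _ = 1 / 2 * Real.exp δ * Real.log (lam j) ^ 2 := by ring

theorem bregman_le_half_exp_delta_dR_sq
    (n : ℕ) (L Lhat : Matrix (Fin n) (Fin n) ℝ)
    (hL : L.PosDef) (hLhat : Lhat.PosDef)
    (δ : ℝ) (hδ : 0 < δ)
    (lam : Fin n → ℝ)
    (hchar : (Lhat⁻¹ * L).charpoly = ∏ j, (X - C (lam j)))
    (hb : ∀ j, Real.exp (-δ) ≤ lam j ∧ lam j ≤ Real.exp δ) :
    dh n L Lhat ≤ (1 / 2) * Real.exp δ * ∑ j, (Real.log (lam j)) ^ 2 :=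
  bregman_le_half_exp_delta_dR_sq_general n L Lhat δ lam hchar hb
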